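/- Let ω = 𝔻, 0 < b < 1, N = 2 and degrees (p,q) ∈ (ℕ*)² with p ≤ q. Set 𝓑 = (1−b²)/(1+b²), 𝓐 = p/q, λ = (1 + 𝓑(𝓐+1))/(1 + 𝓑(𝓐⁻¹+1)) ∈ (0,1], Δ = [1−λ+(𝓐−λ)𝓑(1+λ)]² + 4[λ + (𝓐+1)𝓑λ(1+λ)] > 0, and s₀ = √( (−[1−λ+(𝓐−λ)𝓑(1+λ)] + √Δ) / (2[λ + (𝓐+1)𝓑λ(1+λ)]) ). Then s₀ ∈ (0,1), and the set of global minimizers of W^micro[·,(p,q)] on (𝔻²)* is exactly { (s₀e^{iθ}, −λs₀e^{iθ}) : θ ∈ ℝ }. In particular λ = 1 if and only if p = q, and for p = q the minimizer set is { ((1 + 4(1−b²)/(1+b²))^{−1/4} e^{iθ}, −(1 + 4(1−b²)/(1+b²))^{−1/4} e^{iθ}) : θ ∈ ℝ }. -/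

import Mathlib

noncomputable section
open Real
namespace GLPin


/-- The microscopic renormalized energy in the circular case for two vortices of degrees
`p, q`: `W^micro((z₁,p),(z₂,q)) = −b²π[ 2pq ln|z₁−z₂|
  + ((1−b²)/(1+b²))( p² ln(1−|z₁|²) + q² ln(1−|z₂|²) + 2pq ln|1−z₁z̄₂| ) ]`. -/
def Wpair (b : ℝ) (p q : ℕ) (z₁ z₂ : ℂ) : ℝ :=
  -(b ^ 2) * π *
    (2 * p * q * Real.log ‖z₁ - z₂‖
      + (1 - b ^ 2) / (1 + b ^ 2) *
          ((p : ℝ) ^ 2 * Real.log (1 - ‖z₁‖ ^ 2)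
            + (q : ℝ) ^ 2 * Real.log (1 - ‖z₂‖ ^ 2)
            + 2 * p * q * Real.log ‖1 - z₁ * (starRingEnd ℂ) z₂‖))

lemma quadpos (a c h u v : ℝ) (ha : 0 < a) (hk : h^2 < a*c) (huv : u ≠ 0 ∨ v ≠ 0) :
    0 < a*u^2 + 2*h*u*v + c*v^2 := by
  rcases eq_or_ne v 0 with hv | hv
  · subst hv
    rcases huv with hu | hv'
    · have hu2 : 0 < u^2 := lt_of_le_of_ne (sq_nonneg u) (Ne.symm (pow_ne_zero 2 hu))
      nlinarith [mul_pos ha hu2]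
    · exact absurd rfl hv'
  · have hv2 : 0 < v^2 := lt_of_le_of_ne (sq_nonneg v) (Ne.symm (pow_ne_zero 2 hv))
    nlinarith [sq_nonneg (a*u + h*v), mul_pos (sub_pos.mpr hk) hv2]

set_option maxHeartbeats 1000000 in
lemma hessNeg (B P Q S T u v : ℝ) (hB0 : 0 < B) (hB1 : B < 1) (hP : 1 ≤ P) (hPQ : P ≤ Q)
    (hS0 : 0 ≤ S) (hS1 : S < 1) (hT0 : 0 ≤ T) (hT1 : T < 1) (hST : 0 < S + T)
    (huv : u ≠ 0 ∨ v ≠ 0) :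
    -(2*P*Q)*(u+v)^2/(S+T)^2 - 2*B*P^2*u^2*(1+S^2)/(1-S^2)^2 - 2*B*Q^2*v^2*(1+T^2)/(1-T^2)^2
      + B*(2*P*Q)*(2*u*v*(1+S*T) - (u*T+S*v)^2)/(1+S*T)^2 < 0 := by
  have hQ : 1 ≤ Q := le_trans hP hPQ
  have hP0 : (0:ℝ) < P := lt_of_lt_of_le one_pos hP
  have hQ0 : (0:ℝ) < Q := lt_of_lt_of_le one_pos hQ
  have hS2 : 0 < 1 - S^2 := by nlinarith
  have hT2 : 0 < 1 - T^2 := by nlinarith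
  have hST2 : (1:ℝ) ≤ (1 + S*T)^2 := by nlinarith [mul_nonneg hS0 hT0, sq_nonneg (S*T)]
  have hST2' : (0:ℝ) < 1 + S*T := by nlinarith [mul_nonneg hS0 hT0]
  have hSTsq : 0 < (S+T)^2 := by positivity
  set A : ℝ := 2*P*Q/(S+T)^2 with hA
  set C : ℝ := B*(2*P*Q)/(1+S*T)^2 with hC
  set P2 : ℝ := 2*B*P^2*(1+S^2)/(1-S^2)^2 + B*(2*P*Q)*T^2/(1+S*T)^2 with hP2
  set Q2 : ℝ := 2*B*Q^2*(1+T^2)/(1-T^2)^2 + B*(2*P*Q)*S^2/(1+S*T)^2 with hQ2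
  have hApos : 0 < A := by rw [hA]; positivity
  have hCpos : 0 < C := by rw [hC]; positivity
  have hfs : (1-S^2)^2 ≤ 1+S^2 := by nlinarith [sq_nonneg S, sq_nonneg (S*S), mul_le_one₀ (le_of_lt hS1) hS0 (le_of_lt hS1)]
  have hft : (1-T^2)^2 ≤ 1+T^2 := by nlinarith [sq_nonneg T, sq_nonneg (T*T), mul_le_one₀ (le_of_lt hT1) hT0 (le_of_lt hT1)]
  have hP2lb : 2*B*P^2 ≤ P2 := by
    rw [hP2]
    have h1 : 2*B*P^2 ≤ 2*B*P^2*(1+S^2)/(1-S^2)^2 := by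
      rw [le_div_iff₀ (by positivity)]
      nlinarith [mul_le_mul_of_nonneg_left hfs (show (0:ℝ) ≤ 2*B*P^2 by positivity)]
    have h2 : 0 ≤ B*(2*P*Q)*T^2/(1+S*T)^2 := by positivity
    linarith
  have hQ2lb : 2*B*Q^2 ≤ Q2 := by
    rw [hQ2]
    have h1 : 2*B*Q^2 ≤ 2*B*Q^2*(1+T^2)/(1-T^2)^2 := by
      rw [le_div_iff₀ (by positivity)]
      nlinarith [mul_le_mul_of_nonneg_left hft (show (0:ℝ) ≤ 2*B*Q^2 by positivity)]
    have h2 : 0 ≤ B*(2*P*Q)*S^2/(1+S*T)^2 := by positivity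
    linarith
  have hP2pos : 0 < P2 := lt_of_lt_of_le (by positivity) hP2lb
  have hQ2pos : 0 < Q2 := lt_of_lt_of_le (by positivity) hQ2lb
  have hCle : C ≤ B*(2*P*Q) := by
    rw [hC]
    exact div_le_self (by positivity) hST2
  have hCsq : C^2 ≤ P2*Q2 := by
    have h1 : C^2 ≤ (B*(2*P*Q))^2 := by nlinarith
    have h2 : (2*B*P^2)*(2*B*Q^2) ≤ P2*Q2 :=
      mul_le_mul hP2lb hQ2lb (by positivity) (le_of_lt hP2pos)
    nlinarith
  have hkey : (A - C)^2 < (A + P2)*(A + Q2) := by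
    nlinarith [mul_pos hApos hCpos, mul_pos hApos hP2pos, mul_pos hApos hQ2pos]
  have hq := quadpos (A + P2) (A + Q2) (A - C) u v (by linarith) hkey huv
  have heq : -(2*P*Q)*(u+v)^2/(S+T)^2 - 2*B*P^2*u^2*(1+S^2)/(1-S^2)^2
      - 2*B*Q^2*v^2*(1+T^2)/(1-T^2)^2
      + B*(2*P*Q)*(2*u*v*(1+S*T) - (u*T+S*v)^2)/(1+S*T)^2
      = -((A + P2)*u^2 + 2*(A - C)*u*v + (A + Q2)*v^2) := by
    rw [hA, hC, hP2, hQ2]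
    ring
  rw [heq]
  linarith

lemma crit (B P Q lam x : ℝ)
    (haQ : lam*Q + (P+Q)*B*lam*(1+lam) ≠ 0) (hcL : Q*(P + B*(P+Q)) ≠ 0)
    (hlamq : lam * (Q*(P + B*(P+Q))) = P*(Q + B*(P+Q)))
    (hx : (lam*Q + (P+Q)*B*lam*(1+lam))*x^2 + (Q*(1-lam) + (P-lam*Q)*B*(1+lam))*x - Q = 0) :
    (2*P*Q*(1-x)*(1+lam*x) - 2*B*P^2*x*(1+lam)*(1+lam*x) + 2*P*Q*B*lam*x*(1+lam)*(1-x) = 0)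
    ∧ (2*P*Q*(1-lam^2*x)*(1+lam*x) - 2*B*Q^2*lam*x*(1+lam)*(1+lam*x)
        + 2*P*Q*B*x*(1+lam)*(1-lam^2*x) = 0) := by
  constructor
  · have h : (lam*Q + (P+Q)*B*lam*(1+lam)) *
        (2*P*Q*(1-x)*(1+lam*x) - 2*B*P^2*x*(1+lam)*(1+lam*x)
          + 2*P*Q*B*lam*x*(1+lam)*(1-x)) = 0 := by
      linear_combination (2*((-1)*P*Q*lam + (-1)*P*Q*B*lam + (-1)*P*Q*B*lam^2 + (-1)*P^2*B*lam + (-1)*P^2*B*lam^2)) * hx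
    exact (mul_eq_zero.mp h).resolve_left haQ
  · have h : ((lam*Q + (P+Q)*B*lam*(1+lam)) * (Q*(P + B*(P+Q)))^4) *
        (2*P*Q*(1-lam^2*x)*(1+lam*x) - 2*B*Q^2*lam*x*(1+lam)*(1+lam*x)
          + 2*P*Q*B*x*(1+lam)*(1-lam^2*x)) = 0 := by
      linear_combination (2*(Q*(P + B*(P+Q)))^4*((-1)*Q^2*B*lam^2 + (-1)*Q^2*B*lam^3 + (-1)*P*Q*lam^3 + (-1)*P*Q*B*lam^2 + (-1)*P*Q*B*lam^3)) * hx + (2*((-1)*Q^9*B^4*lam + (-1)*Q^9*B^4*lam^2 + (-1)*Q^9*B^4*lam^2*x + (-1)*Q^9*B^4*lam^3*x + (-1)*Q^9*B^5*lam*x + (-3)*Q^9*B^5*lam^2*x + (-3)*Q^9*B^5*lam^3*x + (-1)*Q^9*B^5*lam^4*x + (-4)*P*Q^8*B^3*lam + (-4)*P*Q^8*B^3*lam^2 + (-4)*P*Q^8*B^3*lam^2*x + (-4)*P*Q^8*B^3*lam^3*x + (-4)*P*Q^8*B^4*lam + (-4)*P*Q^8*B^4*lam*x + (-4)*P*Q^8*B^4*lam^2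 + (-16)*P*Q^8*B^4*lam^2*x + (-16)*P*Q^8*B^4*lam^3*x + (-4)*P*Q^8*B^4*lam^4*x + (-4)*P*Q^8*B^5*lam*x + (-12)*P*Q^8*B^5*lam^2*x + (-12)*P*Q^8*B^5*lam^3*x + (-4)*P*Q^8*B^5*lam^4*x + (-6)*P^2*Q^7*B^2*lam + (-6)*P^2*Q^7*B^2*lam^2 + (-6)*P^2*Q^7*B^2*lam^2*x + (-6)*P^2*Q^7*B^2*lam^3*x + (-12)*P^2*Q^7*B^3*lam + (-6)*P^2*Q^7*B^3*lam*x + (-12)*P^2*Q^7*B^3*lam^2 + (-30)*P^2*Q^7*B^3*lam^2*x + (-30)*P^2*Q^7*B^3*lam^3*x + (-6)*P^2*Q^7*B^3*lam^4*x + (-6)*P^2*Q^7*B^4*lam + (-12)*P^2*Q^7*B^4*lam*x + (-6)*P^2*Q^7*B^4*lam^2 + (-42)*P^2*Q^7*B^4*lam^2*x + (-42)*P^2*Q^7*B^4*lam^3*x + (-12)*P^2*Q^7*B^4*lam^4*x + (-6)*P^2*Q^7*B^5*lam*x + (-18)*P^2*Q^7*B^5*lam^2*x + (-18)*P^2*Q^7*B^5*lam^3*x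 + (-6)*P^2*Q^7*B^5*lam^4*x + (-4)*P^3*Q^6*B*lam + (-4)*P^3*Q^6*B*lam^2 + (-4)*P^3*Q^6*B*lam^2*x + (-4)*P^3*Q^6*B*lam^3*x + (-12)*P^3*Q^6*B^2*lam + (-4)*P^3*Q^6*B^2*lam*x + (-12)*P^3*Q^6*B^2*lam^2 + (-24)*P^3*Q^6*B^2*lam^2*x + (-24)*P^3*Q^6*B^2*lam^3*x + (-4)*P^3*Q^6*B^2*lam^4*x + (-12)*P^3*Q^6*B^3*lam + (-12)*P^3*Q^6*B^3*lam*x + (-12)*P^3*Q^6*B^3*lam^2 + (-48)*P^3*Q^6*B^3*lam^2*x + (-48)*P^3*Q^6*B^3*lam^3*x + (-12)*P^3*Q^6*B^3*lam^4*x + (-4)*P^3*Q^6*B^4*lam + (-12)*P^3*Q^6*B^4*lam*x + (-4)*P^3*Q^6*B^4*lam^2 + (-40)*P^3*Q^6*B^4*lam^2*x + (-40)*P^3*Q^6*B^4*lam^3*x + (-12)*P^3*Q^6*B^4*lam^4*x + (-4)*P^3*Q^6*B^5*lam*x + (-12)*P^3*Q^6*B^5*lam^2*x + (-12)*P^3*Q^6*B^5*lam^3*x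 + (-4)*P^3*Q^6*B^5*lam^4*x + (-1)*P^4*Q^5*lam + (-1)*P^4*Q^5*lam^2 + (-1)*P^4*Q^5*lam^2*x + (-1)*P^4*Q^5*lam^3*x + (-4)*P^4*Q^5*B*lam + (-1)*P^4*Q^5*B*lam*x + (-4)*P^4*Q^5*B*lam^2 + (-7)*P^4*Q^5*B*lam^2*x + (-7)*P^4*Q^5*B*lam^3*x + (-1)*P^4*Q^5*B*lam^4*x + (-6)*P^4*Q^5*B^2*lam + (-4)*P^4*Q^5*B^2*lam*x + (-6)*P^4*Q^5*B^2*lam^2 + (-18)*P^4*Q^5*B^2*lam^2*x + (-18)*P^4*Q^5*B^2*lam^3*x + (-4)*P^4*Q^5*B^2*lam^4*x + (-4)*P^4*Q^5*B^3*lam + (-6)*P^4*Q^5*B^3*lam*x + (-4)*P^4*Q^5*B^3*lam^2 + (-22)*P^4*Q^5*B^3*lam^2*x + (-22)*P^4*Q^5*B^3*lam^3*x + (-6)*P^4*Q^5*B^3*lam^4*x + (-1)*P^4*Q^5*B^4*lam + (-4)*P^4*Q^5*B^4*lam*x + (-1)*P^4*Q^5*B^4*lam^2 + (-13)*P^4*Q^5*B^4*lam^2*x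 + (-13)*P^4*Q^5*B^4*lam^3*x + (-4)*P^4*Q^5*B^4*lam^4*x + (-1)*P^4*Q^5*B^5*lam*x + (-3)*P^4*Q^5*B^5*lam^2*x + (-3)*P^4*Q^5*B^5*lam^3*x + (-1)*P^4*Q^5*B^5*lam^4*x)) * hlamq
    rcases mul_eq_zero.mp h with h' | h'
    · rcases mul_eq_zero.mp h' with h'' | h''
      · exact absurd h'' haQ
      · exact absurd h'' (pow_ne_zero 4 hcL)
    · exact h'

set_option maxHeartbeats 1000000 in
lemma core (B P Q s0 t0 : ℝ) (hB0 : 0 < B) (hB1 : B < 1)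
    (hP : 1 ≤ P) (hPQ : P ≤ Q)
    (hs00 : 0 < s0) (hs01 : s0 < 1) (ht00 : 0 < t0) (ht01 : t0 < 1)
    (hgs : 2*P*Q/(s0+t0) - 2*B*P^2*s0/(1-s0^2) + B*(2*P*Q)*t0/(1+s0*t0) = 0)
    (hgt : 2*P*Q/(s0+t0) - 2*B*Q^2*t0/(1-t0^2) + B*(2*P*Q)*s0/(1+s0*t0) = 0)
    (s t : ℝ) (hs : 0 ≤ s) (hs' : s < 1) (ht : 0 ≤ t) (ht' : t < 1)
    (hst : 0 < s + t) (hne : ¬(s = s0 ∧ t = t0)) :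
    2*P*Q*Real.log (s+t) + B*(P^2*Real.log (1-s^2) + Q^2*Real.log (1-t^2)
        + 2*P*Q*Real.log (1+s*t))
      < 2*P*Q*Real.log (s0+t0) + B*(P^2*Real.log (1-s0^2) + Q^2*Real.log (1-t0^2)
        + 2*P*Q*Real.log (1+s0*t0)) := by
  have huv : s - s0 ≠ 0 ∨ t - t0 ≠ 0 := by
    by_contra h
    push_neg at h
    exact hne ⟨by have := h.1; linarith [sub_eq_zero.mp this],
      by have := h.2; linarith [sub_eq_zero.mp this]⟩
  set φ : ℝ → ℝ := fun r =>
    2*P*Q*Real.log ((s0 + r*(s-s0)) + (t0 + r*(t-t0)))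
    + B*(P^2*Real.log (1-(s0 + r*(s-s0))^2) + Q^2*Real.log (1-(t0 + r*(t-t0))^2)
        + 2*P*Q*Real.log (1+(s0 + r*(s-s0))*(t0 + r*(t-t0)))) with hφ
  set D1 : ℝ → ℝ := fun r =>
    2*P*Q*(((s-s0)+(t-t0))/((s0 + r*(s-s0)) + (t0 + r*(t-t0))))
    + B*(P^2*((-(2*(s0 + r*(s-s0))*(s-s0)))/(1-(s0 + r*(s-s0))^2))
        + Q^2*((-(2*(t0 + r*(t-t0))*(t-t0)))/(1-(t0 + r*(t-t0))^2))
        + 2*P*Q*(((s-s0)*(t0 + r*(t-t0)) + (s0 + r*(s-s0))*(t-t0))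
            /(1+(s0 + r*(s-s0))*(t0 + r*(t-t0))))) with hD1
  set D2 : ℝ → ℝ := fun r =>
    2*P*Q*(-(((s-s0)+(t-t0))^2)/((s0 + r*(s-s0)) + (t0 + r*(t-t0)))^2)
    + B*(P^2*((-(2*(s-s0)^2*(1+(s0 + r*(s-s0))^2)))/(1-(s0 + r*(s-s0))^2)^2)
        + Q^2*((-(2*(t-t0)^2*(1+(t0 + r*(t-t0))^2)))/(1-(t0 + r*(t-t0))^2)^2)
        + 2*P*Q*((2*(s-s0)*(t-t0)*(1+(s0 + r*(s-s0))*(t0 + r*(t-t0)))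
            - ((s-s0)*(t0 + r*(t-t0)) + (s0 + r*(s-s0))*(t-t0))^2)
          /(1+(s0 + r*(s-s0))*(t0 + r*(t-t0)))^2)) with hD2
  have hSmem : ∀ r ∈ Set.Icc (0:ℝ) 1, 0 ≤ s0 + r*(s-s0) ∧ s0 + r*(s-s0) < 1 := by
    intro r hr
    obtain ⟨hr0, hr1⟩ := hr
    constructor
    · nlinarith [mul_nonneg hr0 hs, mul_nonneg (sub_nonneg.mpr hr1) hs00.le]
    · rcases hr1.lt_or_eq with h | h
      · nlinarith [mul_pos (sub_pos.mpr h) (sub_pos.mpr hs01),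
          mul_nonneg hr0 (sub_nonneg.mpr hs'.le)]
      · rw [h]; nlinarith
  have hTmem : ∀ r ∈ Set.Icc (0:ℝ) 1, 0 ≤ t0 + r*(t-t0) ∧ t0 + r*(t-t0) < 1 := by
    intro r hr
    obtain ⟨hr0, hr1⟩ := hr
    constructor
    · nlinarith [mul_nonneg hr0 ht, mul_nonneg (sub_nonneg.mpr hr1) ht00.le]
    · rcases hr1.lt_or_eq with h | h
      · nlinarith [mul_pos (sub_pos.mpr h) (sub_pos.mpr ht01),
          mul_nonneg hr0 (sub_nonneg.mpr ht'.le)]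
      · rw [h]; nlinarith
  have hsum : ∀ r ∈ Set.Icc (0:ℝ) 1, 0 < (s0 + r*(s-s0)) + (t0 + r*(t-t0)) := by
    intro r hr
    rcases hr.1.eq_or_lt with h | h
    · rw [← h]; nlinarith
    · nlinarith [mul_pos h hst, mul_nonneg (sub_nonneg.mpr hr.2)
        (show (0:ℝ) ≤ s0 + t0 by linarith)]
  have hder : ∀ r ∈ Set.Icc (0:ℝ) 1, HasDerivAt φ (D1 r) r ∧ HasDerivAt D1 (D2 r) r := by
    intro r hr
    obtain ⟨hS0r, hS1r⟩ := hSmem r hr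
    obtain ⟨hT0r, hT1r⟩ := hTmem r hr
    have hsumr := hsum r hr
    have hS2r : 1 - (s0 + r*(s-s0))^2 ≠ 0 := by nlinarith
    have hT2r : 1 - (t0 + r*(t-t0))^2 ≠ 0 := by nlinarith
    have hPrr : 1 + (s0 + r*(s-s0))*(t0 + r*(t-t0)) ≠ 0 := by
      nlinarith [mul_nonneg hS0r hT0r]
    have hS : HasDerivAt (fun r : ℝ => s0 + r*(s-s0)) (s-s0) r :=
      (hasDerivAt_mul_const (s-s0)).const_add s0
    have hT : HasDerivAt (fun r : ℝ => t0 + r*(t-t0)) (t-t0) r :=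
      (hasDerivAt_mul_const (t-t0)).const_add t0
    have h1 : HasDerivAt (fun r : ℝ => (s0 + r*(s-s0)) + (t0 + r*(t-t0)))
        ((s-s0)+(t-t0)) r := hS.add hT
    have hden2 : HasDerivAt (fun r : ℝ => 1-(s0 + r*(s-s0))^2)
        (-((2:ℕ)*(s0 + r*(s-s0))^(2-1)*(s-s0))) r := (hS.pow 2).const_sub 1
    have hden3 : HasDerivAt (fun r : ℝ => 1-(t0 + r*(t-t0))^2)
        (-((2:ℕ)*(t0 + r*(t-t0))^(2-1)*(t-t0))) r := (hT.pow 2).const_sub 1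
    have hden4 : HasDerivAt (fun r : ℝ => 1+(s0 + r*(s-s0))*(t0 + r*(t-t0)))
        ((s-s0)*(t0 + r*(t-t0)) + (s0 + r*(s-s0))*(t-t0)) r := (hS.mul hT).const_add 1
    constructor
    · -- first derivative
      have L1 : HasDerivAt (fun r : ℝ => Real.log ((s0 + r*(s-s0)) + (t0 + r*(t-t0))))
          (((s-s0)+(t-t0))/((s0 + r*(s-s0)) + (t0 + r*(t-t0)))) r := h1.log hsumr.ne'
      have L2 : HasDerivAt (fun r : ℝ => Real.log (1-(s0 + r*(s-s0))^2))
          ((-(2*(s0 + r*(s-s0))*(s-s0)))/(1-(s0 + r*(s-s0))^2)) r := by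
        convert hden2.log hS2r using 1
        norm_num
      have L3 : HasDerivAt (fun r : ℝ => Real.log (1-(t0 + r*(t-t0))^2))
          ((-(2*(t0 + r*(t-t0))*(t-t0)))/(1-(t0 + r*(t-t0))^2)) r := by
        convert hden3.log hT2r using 1
        norm_num
      have L4 : HasDerivAt (fun r : ℝ =>
            Real.log (1+(s0 + r*(s-s0))*(t0 + r*(t-t0))))
          (((s-s0)*(t0 + r*(t-t0)) + (s0 + r*(s-s0))*(t-t0))
            /(1+(s0 + r*(s-s0))*(t0 + r*(t-t0)))) r := hden4.log hPrr
      exact (L1.const_mul (2*P*Q)).add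
        ((((L2.const_mul (P^2)).add (L3.const_mul (Q^2))).add
          (L4.const_mul (2*P*Q))).const_mul B)
    · -- second derivative
      have M1 : HasDerivAt (fun r : ℝ =>
            ((s-s0)+(t-t0))/((s0 + r*(s-s0)) + (t0 + r*(t-t0))))
          (-((((s-s0)+(t-t0)))^2)/((s0 + r*(s-s0)) + (t0 + r*(t-t0)))^2) r := by
        refine ((hasDerivAt_const r ((s-s0)+(t-t0))).fun_div h1 hsumr.ne').congr_deriv ?_
        ring
      have M2 : HasDerivAt (fun r : ℝ =>
            (-(2*(s0 + r*(s-s0))*(s-s0)))/(1-(s0 + r*(s-s0))^2))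
          ((-(2*(s-s0)^2*(1+(s0 + r*(s-s0))^2)))/(1-(s0 + r*(s-s0))^2)^2) r := by
        refine (((hS.const_mul 2).mul_const (s-s0)).neg.fun_div hden2 hS2r).congr_deriv ?_
        norm_num
        ring
      have M3 : HasDerivAt (fun r : ℝ =>
            (-(2*(t0 + r*(t-t0))*(t-t0)))/(1-(t0 + r*(t-t0))^2))
          ((-(2*(t-t0)^2*(1+(t0 + r*(t-t0))^2)))/(1-(t0 + r*(t-t0))^2)^2) r := by
        refine (((hT.const_mul 2).mul_const (t-t0)).neg.fun_div hden3 hT2r).congr_deriv ?_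
        norm_num
        ring
      have M4 : HasDerivAt (fun r : ℝ =>
            ((s-s0)*(t0 + r*(t-t0)) + (s0 + r*(s-s0))*(t-t0))
              /(1+(s0 + r*(s-s0))*(t0 + r*(t-t0))))
          ((2*(s-s0)*(t-t0)*(1+(s0 + r*(s-s0))*(t0 + r*(t-t0)))
            - ((s-s0)*(t0 + r*(t-t0)) + (s0 + r*(s-s0))*(t-t0))^2)
          /(1+(s0 + r*(s-s0))*(t0 + r*(t-t0)))^2) r := by
        refine (((hT.const_mul (s-s0)).add (hS.mul_const (t-t0))).fun_div hden4 hPrr).congr_deriv ?_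
        simp only [Pi.add_apply]
        ring
      exact (M1.const_mul (2*P*Q)).add
        ((((M2.const_mul (P^2)).add (M3.const_mul (Q^2))).add
          (M4.const_mul (2*P*Q))).const_mul B)
  have hD2neg : ∀ r ∈ Set.Icc (0:ℝ) 1, D2 r < 0 := by
    intro r hr
    obtain ⟨hS0r, hS1r⟩ := hSmem r hr
    obtain ⟨hT0r, hT1r⟩ := hTmem r hr
    have hflat := hessNeg B P Q (s0 + r*(s-s0)) (t0 + r*(t-t0)) (s-s0) (t-t0)
      hB0 hB1 hP hPQ hS0r hS1r hT0r hT1r (hsum r hr) huv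
    have : D2 r = -(2*P*Q)*((s-s0)+(t-t0))^2/((s0 + r*(s-s0))+(t0 + r*(t-t0)))^2
        - 2*B*P^2*(s-s0)^2*(1+(s0 + r*(s-s0))^2)/(1-(s0 + r*(s-s0))^2)^2
        - 2*B*Q^2*(t-t0)^2*(1+(t0 + r*(t-t0))^2)/(1-(t0 + r*(t-t0))^2)^2
        + B*(2*P*Q)*(2*(s-s0)*(t-t0)*(1+(s0 + r*(s-s0))*(t0 + r*(t-t0)))
            - ((s-s0)*(t0 + r*(t-t0))+(s0 + r*(s-s0))*(t-t0))^2)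
          /(1+(s0 + r*(s-s0))*(t0 + r*(t-t0)))^2 := by
      simp only [hD2]
      ring
    rw [this]
    exact hflat
  have hmono : StrictAntiOn D1 (Set.Icc (0:ℝ) 1) := by
    apply strictAntiOn_of_deriv_neg (convex_Icc 0 1)
    · exact fun r hr => ((hder r hr).2).continuousAt.continuousWithinAt
    · intro r hr
      rw [interior_Icc] at hr
      rw [((hder r (Set.Ioo_subset_Icc_self hr)).2).deriv]
      exact hD2neg r (Set.Ioo_subset_Icc_self hr)
  obtain ⟨ξ, hξ, hslope⟩ := exists_hasDerivAt_eq_slope φ D1 one_pos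
    (fun r hr => ((hder r hr).1).continuousAt.continuousWithinAt)
    (fun x hx => (hder x (Set.Ioo_subset_Icc_self hx)).1)
  have hD10 : D1 0 = 0 := by
    simp only [hD1]
    norm_num
    linear_combination (s-s0)*hgs + (t-t0)*hgt
  have hξneg : D1 ξ < 0 := by
    have := hmono (Set.left_mem_Icc.mpr one_pos.le) (Set.Ioo_subset_Icc_self hξ) hξ.1
    rw [hD10] at this
    exact this
  have hφ1 : φ 1 = 2*P*Q*Real.log (s+t) + B*(P^2*Real.log (1-s^2) + Q^2*Real.log (1-t^2)
      + 2*P*Q*Real.log (1+s*t)) := by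
    simp only [hφ]
    rw [show s0+1*(s-s0) = s by ring, show t0+1*(t-t0) = t by ring]
  have hφ0 : φ 0 = 2*P*Q*Real.log (s0+t0) + B*(P^2*Real.log (1-s0^2) + Q^2*Real.log (1-t0^2)
      + 2*P*Q*Real.log (1+s0*t0)) := by
    simp only [hφ]
    norm_num
  rw [hφ1, hφ0] at hslope
  norm_num at hslope
  linarith
lemma lamBounds (𝓑 𝓐 lam : ℝ) (hB0 : 0 < 𝓑) (hA0 : 0 < 𝓐) (hA1 : 𝓐 ≤ 1)
    (hlam : lam = (1 + 𝓑 * (𝓐 + 1)) / (1 + 𝓑 * (𝓐⁻¹ + 1))) :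
    0 < lam ∧ lam ≤ 1 ∧ lam * (1 + 𝓑 * (𝓐⁻¹ + 1)) = 1 + 𝓑 * (𝓐 + 1) := by
  have hAi1 : 1 ≤ 𝓐⁻¹ := (one_le_inv₀ hA0).mpr hA1
  have hden : 0 < 1 + 𝓑 * (𝓐⁻¹ + 1) := by
    have := mul_pos hB0 (show (0:ℝ) < 𝓐⁻¹ + 1 by linarith)
    linarith
  have hnum : 0 < 1 + 𝓑 * (𝓐 + 1) := by
    have := mul_pos hB0 (show (0:ℝ) < 𝓐 + 1 by linarith)
    linarith
  refine ⟨hlam ▸ div_pos hnum hden, ?_, by rw [hlam, div_mul_cancel₀ _ hden.ne']⟩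
  rw [hlam, div_le_one hden]
  have := mul_le_mul_of_nonneg_left (show 𝓐 + 1 ≤ 𝓐⁻¹ + 1 by linarith) hB0.le
  linarith

lemma Xfacts (𝓑 𝓐 lam Δ s₀ : ℝ) (hB0 : 0 < 𝓑) (hA0 : 0 < 𝓐) (hlam0 : 0 < lam)
    (hΔ : Δ = (1 - lam + (𝓐 - lam) * 𝓑 * (1 + lam)) ^ 2
      + 4 * (lam + (𝓐 + 1) * 𝓑 * lam * (1 + lam)))
    (hs₀ : s₀ = Real.sqrt ((-(1 - lam + (𝓐 - lam) * 𝓑 * (1 + lam)) + Real.sqrt Δ)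
      / (2 * (lam + (𝓐 + 1) * 𝓑 * lam * (1 + lam))))) :
    0 < Δ ∧ 0 < s₀ ∧ s₀ < 1 ∧
    (lam + (𝓐 + 1) * 𝓑 * lam * (1 + lam)) * (s₀^2)^2
      + (1 - lam + (𝓐 - lam) * 𝓑 * (1 + lam)) * s₀^2 - 1 = 0 := by
  have ha' : 0 < lam + (𝓐 + 1) * 𝓑 * lam * (1 + lam) := by
    have := mul_pos (mul_pos (mul_pos (show (0:ℝ) < 𝓐+1 by linarith) hB0) hlam0)
      (show (0:ℝ) < 1+lam by linarith)
    linarith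
  have hΔ0 : 0 < Δ := by
    rw [hΔ]
    linarith [sq_nonneg (1 - lam + (𝓐 - lam) * 𝓑 * (1 + lam))]
  obtain ⟨X, hXdef⟩ : ∃ X : ℝ, X = (-(1 - lam + (𝓐 - lam) * 𝓑 * (1 + lam)) + Real.sqrt Δ)
      / (2 * (lam + (𝓐 + 1) * 𝓑 * lam * (1 + lam))) := ⟨_, rfl⟩
  rw [← hXdef] at hs₀
  have hu'lt : 1 - lam + (𝓐 - lam) * 𝓑 * (1 + lam) < Real.sqrt Δ := by
    have h1 : (1 - lam + (𝓐 - lam) * 𝓑 * (1 + lam))^2 < Δ := by rw [hΔ]; linarith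
    calc 1 - lam + (𝓐 - lam) * 𝓑 * (1 + lam)
        ≤ |1 - lam + (𝓐 - lam) * 𝓑 * (1 + lam)| := le_abs_self _
      _ = Real.sqrt ((1 - lam + (𝓐 - lam) * 𝓑 * (1 + lam))^2) := (Real.sqrt_sq_eq_abs _).symm
      _ < Real.sqrt Δ := Real.sqrt_lt_sqrt (sq_nonneg _) h1
  have hX0 : 0 < X := by rw [hXdef]; exact div_pos (by linarith) (by linarith)
  have hs0pos : 0 < s₀ := by rw [hs₀]; exact Real.sqrt_pos.mpr hX0
  have hs0sq : s₀^2 = X := by rw [hs₀]; exact Real.sq_sqrt hX0.le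
  have e1 : 2 * (lam + (𝓐 + 1) * 𝓑 * lam * (1 + lam)) * X
      = -(1 - lam + (𝓐 - lam) * 𝓑 * (1 + lam)) + Real.sqrt Δ := by
    rw [hXdef, mul_comm, div_mul_cancel₀ _ (show 2 * (lam + (𝓐 + 1) * 𝓑 * lam * (1 + lam)) ≠ 0
      by linarith)]
  have e2 : (2 * (lam + (𝓐 + 1) * 𝓑 * lam * (1 + lam)) * X
      + (1 - lam + (𝓐 - lam) * 𝓑 * (1 + lam)))^2 = Δ := by
    rw [e1, show -(1 - lam + (𝓐 - lam) * 𝓑 * (1 + lam)) + Real.sqrt Δ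
      + (1 - lam + (𝓐 - lam) * 𝓑 * (1 + lam)) = Real.sqrt Δ by ring]
    exact Real.sq_sqrt hΔ0.le
  have e3 : (2 * (lam + (𝓐 + 1) * 𝓑 * lam * (1 + lam)) * X
      + (1 - lam + (𝓐 - lam) * 𝓑 * (1 + lam)))^2
      = (1 - lam + (𝓐 - lam) * 𝓑 * (1 + lam))^2
        + 4 * (lam + (𝓐 + 1) * 𝓑 * lam * (1 + lam)) := by rw [e2, hΔ]
  have e4 : (lam + (𝓐 + 1) * 𝓑 * lam * (1 + lam)) *
      ((lam + (𝓐 + 1) * 𝓑 * lam * (1 + lam)) * X^2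
        + (1 - lam + (𝓐 - lam) * 𝓑 * (1 + lam)) * X - 1) = 0 := by
    linear_combination e3/4
  have hXq : (lam + (𝓐 + 1) * 𝓑 * lam * (1 + lam)) * X^2
      + (1 - lam + (𝓐 - lam) * 𝓑 * (1 + lam)) * X - 1 = 0 :=
    (mul_eq_zero.mp e4).resolve_left ha'.ne'
  have hau : 1 < (lam + (𝓐 + 1) * 𝓑 * lam * (1 + lam))
      + (1 - lam + (𝓐 - lam) * 𝓑 * (1 + lam)) := by
    have hid : (lam + (𝓐 + 1) * 𝓑 * lam * (1 + lam)) + (1 - lam + (𝓐 - lam) * 𝓑 * (1 + lam))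
        = 1 + 𝓑 * 𝓐 * (1 + lam)^2 := by ring
    have h2 : 0 < 𝓑 * 𝓐 * (1 + lam)^2 :=
      mul_pos (mul_pos hB0 hA0) (pow_pos (by linarith) 2)
    linarith [hid, h2]
  have hX1 : X < 1 := by
    by_contra h
    push_neg at h
    have hident : (lam + (𝓐 + 1) * 𝓑 * lam * (1 + lam)) * X^2
        + (1 - lam + (𝓐 - lam) * 𝓑 * (1 + lam)) * X - 1
        = X*(((lam + (𝓐 + 1) * 𝓑 * lam * (1 + lam))
            + (1 - lam + (𝓐 - lam) * 𝓑 * (1 + lam))) - 1)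
          + (X-1)*((lam + (𝓐 + 1) * 𝓑 * lam * (1 + lam))*X+1) := by ring
    have h5 : 0 < X*(((lam + (𝓐 + 1) * 𝓑 * lam * (1 + lam))
        + (1 - lam + (𝓐 - lam) * 𝓑 * (1 + lam))) - 1) := mul_pos hX0 (by linarith)
    have h6 : 0 ≤ (X-1)*((lam + (𝓐 + 1) * 𝓑 * lam * (1 + lam))*X+1) :=
      mul_nonneg (by linarith) (by linarith [mul_pos ha' hX0])
    linarith [hXq, hident, h5, h6]
  have hs01 : s₀ < 1 := by
    rw [hs₀]
    calc Real.sqrt X < Real.sqrt 1 := Real.sqrt_lt_sqrt hX0.le hX1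
      _ = 1 := Real.sqrt_one
  rw [hs0sq]
  exact ⟨hΔ0, hs0pos, hs01, hXq⟩

lemma conj_exp_I (θ : ℝ) : (starRingEnd ℂ) (Complex.exp ((θ:ℂ)*Complex.I))
    = Complex.exp (-((θ:ℂ)*Complex.I)) := by
  rw [← Complex.exp_conj]
  congr 1
  simp [map_mul, Complex.conj_ofReal, Complex.conj_I]

lemma exp_I_mul_exp_neg_I (θ : ℝ) :
    Complex.exp ((θ:ℂ)*Complex.I) * Complex.exp (-((θ:ℂ)*Complex.I)) = 1 := by
  rw [← Complex.exp_add]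
  simp

lemma abs_exp_I (θ : ℝ) : ‖Complex.exp ((θ:ℂ)*Complex.I)‖ = 1 :=
  Complex.norm_exp_ofReal_mul_I θ

lemma Tpoint (s0 t0 θ : ℝ) (hs0 : 0 < s0) (ht0 : 0 < t0) :
    ‖(s0:ℂ)*Complex.exp ((θ:ℂ)*Complex.I)‖ = s0 ∧
    ‖-((t0:ℝ):ℂ)*Complex.exp ((θ:ℂ)*Complex.I)‖ = t0 ∧
    ‖(s0:ℂ)*Complex.exp ((θ:ℂ)*Complex.I)
      - (-((t0:ℝ):ℂ)*Complex.exp ((θ:ℂ)*Complex.I))‖ = s0 + t0 ∧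
    ‖1 - ((s0:ℂ)*Complex.exp ((θ:ℂ)*Complex.I))
      * (starRingEnd ℂ) (-((t0:ℝ):ℂ)*Complex.exp ((θ:ℂ)*Complex.I))‖ = 1 + s0*t0 := by
  have he := abs_exp_I θ
  refine ⟨?_, ?_, ?_, ?_⟩
  · rw [norm_mul, he, Complex.norm_real, Real.norm_eq_abs, abs_of_pos hs0, mul_one]
  · rw [norm_mul, he, mul_one, norm_neg, Complex.norm_real, Real.norm_eq_abs, abs_of_pos ht0]
  · rw [show (s0:ℂ)*Complex.exp ((θ:ℂ)*Complex.I)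
        - (-((t0:ℝ):ℂ)*Complex.exp ((θ:ℂ)*Complex.I))
        = (((s0+t0:ℝ)):ℂ)*Complex.exp ((θ:ℂ)*Complex.I) by push_cast; ring]
    rw [norm_mul, he, mul_one, Complex.norm_real, Real.norm_eq_abs, abs_of_pos (by linarith)]
  · rw [show ((s0:ℂ)*Complex.exp ((θ:ℂ)*Complex.I))
        * (starRingEnd ℂ) (-((t0:ℝ):ℂ)*Complex.exp ((θ:ℂ)*Complex.I))
        = -(((s0*t0:ℝ)):ℂ) * (Complex.exp ((θ:ℂ)*Complex.I)
            * Complex.exp (-((θ:ℂ)*Complex.I))) by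
      rw [map_mul, conj_exp_I, map_neg, Complex.conj_ofReal]; push_cast; ring]
    rw [exp_I_mul_exp_neg_I, mul_one]
    rw [show (1:ℂ) - -(((s0*t0:ℝ)):ℂ) = (((1+s0*t0:ℝ)):ℂ) by push_cast; ring]
    rw [Complex.norm_real, Real.norm_eq_abs, abs_of_pos (by positivity)]

lemma antipodal (z₁ z₂ : ℂ) (h1 : z₁ ≠ 0) (h2 : z₂ ≠ 0)
    (h : ‖z₁ - z₂‖ = ‖z₁‖ + ‖z₂‖) :
    ∃ θ : ℝ, z₁ = ((‖z₁‖ : ℝ):ℂ) * Complex.exp ((θ:ℂ)*Complex.I) ∧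
      z₂ = -((‖z₂‖ : ℝ):ℂ) * Complex.exp ((θ:ℂ)*Complex.I) := by
  have hray : SameRay ℝ z₁ (-z₂) := by
    rw [sameRay_iff_norm_add]
    rw [← sub_eq_add_neg, norm_neg]
    simpa using h
  obtain ⟨r, hr0, hr⟩ := hray.exists_nonneg_left h1
  refine ⟨Complex.arg z₁, (Complex.norm_mul_exp_arg_mul_I z₁).symm, ?_⟩
  have hz2 : z₂ = -((r:ℂ) * z₁) := by
    rw [← Complex.real_smul, hr, neg_neg]
  have habs : ‖z₂‖ = r * ‖z₁‖ := by
    rw [hz2, norm_neg, norm_mul, Complex.norm_real, Real.norm_eq_abs, abs_of_nonneg hr0]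
  conv_lhs => rw [hz2, ← Complex.norm_mul_exp_arg_mul_I z₁]
  rw [habs]
  push_cast
  ring

lemma absFacts (z₁ z₂ : ℂ) (h1 : ‖z₁‖ < 1) (h2 : ‖z₂‖ < 1)
    (hne : z₁ ≠ z₂) :
    0 < ‖z₁ - z₂‖ ∧
    ‖z₁ - z₂‖ ≤ ‖z₁‖ + ‖z₂‖ ∧
    0 < ‖1 - z₁ * (starRingEnd ℂ) z₂‖ ∧
    ‖1 - z₁ * (starRingEnd ℂ) z₂‖ ≤ 1 + ‖z₁‖ * ‖z₂‖ ∧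
    ‖z₁‖ * ‖z₂‖ < 1 := by
  have ha1 : 0 ≤ ‖z₁‖ := norm_nonneg z₁
  have ha2 : 0 ≤ ‖z₂‖ := norm_nonneg z₂
  have hst : ‖z₁‖ * ‖z₂‖ < 1 := by
    have h3 : ‖z₁‖ * ‖z₂‖ ≤ ‖z₁‖ * 1 :=
      mul_le_mul_of_nonneg_left h2.le ha1
    linarith [mul_one (‖z₁‖) ▸ h3]
  have hm : ‖z₁ * (starRingEnd ℂ) z₂‖ = ‖z₁‖ * ‖z₂‖ := by
    rw [norm_mul, Complex.norm_conj]
  have hlow : 1 - ‖z₁‖ * ‖z₂‖ ≤ ‖1 - z₁ * (starRingEnd ℂ) z₂‖ := by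
    have := norm_sub_norm_le (1:ℂ) (z₁ * (starRingEnd ℂ) z₂)
    simpa [hm] using this
  refine ⟨norm_pos_iff.mpr (sub_ne_zero.mpr hne), ?_, by linarith, ?_, hst⟩
  · calc ‖z₁ - z₂‖ = ‖z₁ + -z₂‖ := by rw [sub_eq_add_neg]
      _ ≤ ‖z₁‖ + ‖-z₂‖ := norm_add_le _ _
      _ = ‖z₁‖ + ‖z₂‖ := by rw [norm_neg]
  · calc ‖1 - z₁ * (starRingEnd ℂ) z₂‖
        = ‖1 + -(z₁ * (starRingEnd ℂ) z₂)‖ := by rw [sub_eq_add_neg]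
      _ ≤ ‖(1:ℂ)‖ + ‖-(z₁ * (starRingEnd ℂ) z₂)‖ := norm_add_le _ _
      _ = 1 + ‖z₁‖ * ‖z₂‖ := by rw [norm_neg, hm, norm_one]

lemma FleG (B P Q : ℝ) (hB0 : 0 < B) (hP0 : 0 < P) (hQ0 : 0 < Q)
    (z₁ z₂ : ℂ) (h1 : ‖z₁‖ < 1) (h2 : ‖z₂‖ < 1) (hne : z₁ ≠ z₂) :
    2*P*Q*Real.log (‖z₁ - z₂‖)
      + B*(P^2*Real.log (1-(‖z₁‖)^2) + Q^2*Real.log (1-(‖z₂‖)^2)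
        + 2*P*Q*Real.log (‖1 - z₁*(starRingEnd ℂ) z₂‖))
    ≤ 2*P*Q*Real.log (‖z₁‖ + ‖z₂‖)
      + B*(P^2*Real.log (1-(‖z₁‖)^2) + Q^2*Real.log (1-(‖z₂‖)^2)
        + 2*P*Q*Real.log (1+(‖z₁‖)*(‖z₂‖))) := by
  obtain ⟨hd, htri, hp, hub, hst⟩ := absFacts z₁ z₂ h1 h2 hne
  have l1 : Real.log (‖z₁ - z₂‖) ≤ Real.log (‖z₁‖ + ‖z₂‖) :=
    Real.log_le_log hd htri
  have l4 : Real.log (‖1 - z₁*(starRingEnd ℂ) z₂‖)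
      ≤ Real.log (1+(‖z₁‖)*(‖z₂‖)) := Real.log_le_log hp hub
  have c1 : (0:ℝ) ≤ 2*P*Q := by positivity
  have c4 : (0:ℝ) ≤ B := hB0.le
  have := mul_le_mul_of_nonneg_left l1 c1
  have h4 := mul_le_mul_of_nonneg_left l4 c1
  nlinarith [mul_le_mul_of_nonneg_left h4 c4]

lemma FeqG (B P Q : ℝ) (hB0 : 0 < B) (hP0 : 0 < P) (hQ0 : 0 < Q)
    (z₁ z₂ : ℂ) (h1 : ‖z₁‖ < 1) (h2 : ‖z₂‖ < 1) (hne : z₁ ≠ z₂)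
    (heq : 2*P*Q*Real.log (‖z₁ - z₂‖)
      + B*(P^2*Real.log (1-(‖z₁‖)^2) + Q^2*Real.log (1-(‖z₂‖)^2)
        + 2*P*Q*Real.log (‖1 - z₁*(starRingEnd ℂ) z₂‖))
    = 2*P*Q*Real.log (‖z₁‖ + ‖z₂‖)
      + B*(P^2*Real.log (1-(‖z₁‖)^2) + Q^2*Real.log (1-(‖z₂‖)^2)
        + 2*P*Q*Real.log (1+(‖z₁‖)*(‖z₂‖)))) :
    ‖z₁ - z₂‖ = ‖z₁‖ + ‖z₂‖ := by
  obtain ⟨hd, htri, hp, hub, hst⟩ := absFacts z₁ z₂ h1 h2 hne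
  have hkey : (2*P*Q)*(Real.log (‖z₁ - z₂‖)
        - Real.log (‖z₁‖ + ‖z₂‖))
      + (B*(2*P*Q))*(Real.log (‖1 - z₁*(starRingEnd ℂ) z₂‖)
        - Real.log (1+(‖z₁‖)*(‖z₂‖))) = 0 := by
    linear_combination heq
  have l1 : Real.log (‖z₁ - z₂‖) ≤ Real.log (‖z₁‖ + ‖z₂‖) :=
    Real.log_le_log hd htri
  have l4 : Real.log (‖1 - z₁*(starRingEnd ℂ) z₂‖)
      ≤ Real.log (1+(‖z₁‖)*(‖z₂‖)) := Real.log_le_log hp hub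
  have hc1 : (0:ℝ) < 2*P*Q := by positivity
  have hc4 : (0:ℝ) < B*(2*P*Q) := by positivity
  have h1' := mul_le_mul_of_nonneg_left (sub_nonpos.mpr l1) hc1.le
  have h4' := mul_le_mul_of_nonneg_left (sub_nonpos.mpr l4) hc4.le
  rw [mul_zero] at h1' h4'
  have hz1 : (2*P*Q)*(Real.log (‖z₁ - z₂‖)
      - Real.log (‖z₁‖ + ‖z₂‖)) = 0 := by linarith
  have hlogeq : Real.log (‖z₁ - z₂‖)
      = Real.log (‖z₁‖ + ‖z₂‖) := by
    have := (mul_eq_zero.mp hz1).resolve_left hc1.ne'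
    linarith
  exact Real.log_injOn_pos (Set.mem_Ioi.mpr hd)
    (Set.mem_Ioi.mpr (by linarith : (0:ℝ) < ‖z₁‖ + ‖z₂‖)) hlogeq

lemma quadQ (𝓑 𝓐 lam x P Q : ℝ) (hP0 : (0:ℝ) < P) (hQ0 : (0:ℝ) < Q) (h𝓐 : 𝓐 = P/Q)
    (hXq : (lam + (𝓐 + 1) * 𝓑 * lam * (1 + lam)) * x^2
      + (1 - lam + (𝓐 - lam) * 𝓑 * (1 + lam)) * x - 1 = 0) :
    (lam*Q + (P+Q)*𝓑*lam*(1+lam))*x^2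
      + (Q*(1-lam) + (P-lam*Q)*𝓑*(1+lam))*x - Q = 0 := by
  rw [h𝓐] at hXq
  field_simp at hXq
  linear_combination hXq

lemma lamq (𝓑 𝓐 lam P Q : ℝ) (hP0 : (0:ℝ) < P) (hQ0 : (0:ℝ) < Q) (h𝓐 : 𝓐 = P/Q)
    (he : lam * (1 + 𝓑 * (𝓐⁻¹ + 1)) = 1 + 𝓑 * (𝓐 + 1)) :
    lam * (Q*(P + 𝓑*(P+Q))) = P*(Q + 𝓑*(P+Q)) := by
  have hAinv : 𝓐⁻¹ = Q/P := by rw [h𝓐, inv_div]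
  rw [hAinv, h𝓐] at he
  field_simp at he
  linear_combination he

lemma gsgt (𝓑 P Q lam s₀ : ℝ) (hlam0 : 0 < lam) (hlam1 : lam ≤ 1)
    (hs0pos : 0 < s₀) (hs01 : s₀ < 1)
    (hG1 : 2*P*Q*(1-s₀^2)*(1+lam*s₀^2) - 2*𝓑*P^2*s₀^2*(1+lam)*(1+lam*s₀^2)
      + 2*P*Q*𝓑*lam*s₀^2*(1+lam)*(1-s₀^2) = 0)
    (hG2 : 2*P*Q*(1-lam^2*s₀^2)*(1+lam*s₀^2) - 2*𝓑*Q^2*lam*s₀^2*(1+lam)*(1+lam*s₀^2)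
      + 2*P*Q*𝓑*s₀^2*(1+lam)*(1-lam^2*s₀^2) = 0) :
    (2*P*Q/(s₀+lam*s₀) - 2*𝓑*P^2*s₀/(1-s₀^2)
      + 𝓑*(2*P*Q)*(lam*s₀)/(1+s₀*(lam*s₀)) = 0) ∧
    (2*P*Q/(s₀+lam*s₀) - 2*𝓑*Q^2*(lam*s₀)/(1-(lam*s₀)^2)
      + 𝓑*(2*P*Q)*s₀/(1+s₀*(lam*s₀)) = 0) := by
  have hls : lam * s₀ ≤ s₀ := by nlinarith
  have hd1 : s₀ + lam*s₀ ≠ 0 := by nlinarith [mul_pos hlam0 hs0pos]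
  have hd2 : 1 - s₀^2 ≠ 0 := by nlinarith
  have hd3 : 1 + s₀*(lam*s₀) ≠ 0 := by nlinarith [mul_pos hs0pos (mul_pos hlam0 hs0pos)]
  have hd4 : 1 - (lam*s₀)^2 ≠ 0 := by nlinarith [mul_pos hlam0 hs0pos]
  constructor
  · field_simp
    linear_combination hG1
  · have hd4' : 1 - s₀^2*lam^2 ≠ 0 := by intro h; apply hd4; linear_combination h
    have hd3' : 1 + s₀^2*lam ≠ 0 := by intro h; apply hd3; linear_combination h
    field_simp
    linear_combination hG2

lemma Wpair_eq (b : ℝ) (p q : ℕ) (𝓑 : ℝ) (h𝓑 : 𝓑 = (1 - b ^ 2) / (1 + b ^ 2)) (z₁ z₂ : ℂ) :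
    Wpair b p q z₁ z₂ = -(b^2) * π * (2*(p:ℝ)*(q:ℝ)*Real.log (‖z₁ - z₂‖)
      + 𝓑*((p:ℝ)^2*Real.log (1-(‖z₁‖)^2) + (q:ℝ)^2*Real.log (1-(‖z₂‖)^2)
        + 2*(p:ℝ)*(q:ℝ)*Real.log (‖1 - z₁*(starRingEnd ℂ) z₂‖))) := by
  rw [Wpair, ← h𝓑]

lemma Wle_iff (b : ℝ) (hb0 : 0 < b) (F1 F2 : ℝ) :
    (-(b^2)*π*F1 ≤ -(b^2)*π*F2) ↔ F2 ≤ F1 := by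
  have hπ : 0 < b^2*π := by positivity
  constructor
  · intro h; nlinarith [h, hπ]
  · intro h; nlinarith [h, hπ]


set_option maxHeartbeats 1000000 in
/-- **Two positive degrees in the disk, `0 < b < 1`:** explicit determination of the set of
global minimizers of `W^micro[·,(p,q)]` on `(𝔻²)*`. -/
theorem two_vortices_minimizers (b : ℝ) (hb0 : 0 < b) (hb1 : b < 1)
    (p q : ℕ) (hp : 0 < p) (hpq : p ≤ q)
    (𝓑 𝓐 lam Δ s₀ : ℝ)
    (h𝓑 : 𝓑 = (1 - b ^ 2) / (1 + b ^ 2))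
    (h𝓐 : 𝓐 = (p : ℝ) / (q : ℝ))
    (hlam : lam = (1 + 𝓑 * (𝓐 + 1)) / (1 + 𝓑 * (𝓐⁻¹ + 1)))
    (hΔ : Δ = (1 - lam + (𝓐 - lam) * 𝓑 * (1 + lam)) ^ 2
      + 4 * (lam + (𝓐 + 1) * 𝓑 * lam * (1 + lam)))
    (hs₀ : s₀ = Real.sqrt ((-(1 - lam + (𝓐 - lam) * 𝓑 * (1 + lam)) + Real.sqrt Δ)
      / (2 * (lam + (𝓐 + 1) * 𝓑 * lam * (1 + lam))))) :
    (0 < lam ∧ lam ≤ 1) ∧ 0 < Δ ∧ s₀ ∈ Set.Ioo (0:ℝ) 1 ∧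
    {zz : ℂ × ℂ |
        (zz.1 ∈ Metric.ball (0:ℂ) 1 ∧ zz.2 ∈ Metric.ball (0:ℂ) 1 ∧ zz.1 ≠ zz.2) ∧
        ∀ zz' : ℂ × ℂ,
          zz'.1 ∈ Metric.ball (0:ℂ) 1 → zz'.2 ∈ Metric.ball (0:ℂ) 1 → zz'.1 ≠ zz'.2 →
          Wpair b p q zz.1 zz.2 ≤ Wpair b p q zz'.1 zz'.2}
      = {zz : ℂ × ℂ | ∃ θ : ℝ,
          zz = ((s₀ : ℂ) * Complex.exp ((θ : ℂ) * Complex.I),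
            -(((lam * s₀ : ℝ)) : ℂ) * Complex.exp ((θ : ℂ) * Complex.I))} ∧
    (lam = 1 ↔ p = q) ∧
    (p = q →
      {zz : ℂ × ℂ |
          (zz.1 ∈ Metric.ball (0:ℂ) 1 ∧ zz.2 ∈ Metric.ball (0:ℂ) 1 ∧ zz.1 ≠ zz.2) ∧
          ∀ zz' : ℂ × ℂ,
            zz'.1 ∈ Metric.ball (0:ℂ) 1 → zz'.2 ∈ Metric.ball (0:ℂ) 1 → zz'.1 ≠ zz'.2 →
            Wpair b p q zz.1 zz.2 ≤ Wpair b p q zz'.1 zz'.2}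
        = {zz : ℂ × ℂ | ∃ θ : ℝ,
            zz = ((((1 + 4 * (1 - b ^ 2) / (1 + b ^ 2)) ^ (-(1/4 : ℝ)) : ℝ) : ℂ)
                * Complex.exp ((θ : ℂ) * Complex.I),
              -((((1 + 4 * (1 - b ^ 2) / (1 + b ^ 2)) ^ (-(1/4 : ℝ)) : ℝ) : ℂ))
                * Complex.exp ((θ : ℂ) * Complex.I))}) := by
  have hq : 0 < q := lt_of_lt_of_le hp hpq
  have hP1 : (1:ℝ) ≤ (p:ℝ) := by exact_mod_cast hp
  have hQ1 : (1:ℝ) ≤ (q:ℝ) := by exact_mod_cast hq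
  have hPQ' : (p:ℝ) ≤ (q:ℝ) := by exact_mod_cast hpq
  have hP0 : (0:ℝ) < (p:ℝ) := by linarith
  have hQ0 : (0:ℝ) < (q:ℝ) := by linarith
  have hb2 : (0:ℝ) < 1 + b^2 := by positivity
  have h1b : (0:ℝ) < 1 - b^2 := by nlinarith
  have hB0 : 0 < 𝓑 := by rw [h𝓑]; positivity
  have hB1 : 𝓑 < 1 := by rw [h𝓑, div_lt_one hb2]; nlinarith
  have hA0 : 0 < 𝓐 := by rw [h𝓐]; positivity
  have hA1 : 𝓐 ≤ 1 := by rw [h𝓐, div_le_one hQ0]; exact hPQ'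
  obtain ⟨hlam0, hlam1, hlameq⟩ := lamBounds 𝓑 𝓐 lam hB0 hA0 hA1 hlam
  obtain ⟨hΔ0, hs0pos, hs01, hXq⟩ := Xfacts 𝓑 𝓐 lam Δ s₀ hB0 hA0 hlam0 hΔ hs₀
  have hiff : lam = 1 ↔ p = q := by
    constructor
    · intro h
      rw [h, one_mul] at hlameq
      have hBA : 𝓑 * 𝓐 = 𝓑 * 𝓐⁻¹ := by linarith
      have h𝓐eq : 𝓐 = 𝓐⁻¹ := mul_left_cancel₀ hB0.ne' hBA
      have hsq : 𝓐 * 𝓐 = 1 := by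
        nth_rewrite 2 [h𝓐eq]
        exact mul_inv_cancel₀ hA0.ne'
      have hz : (𝓐 - 1) * (𝓐 + 1) = 0 := by linear_combination hsq
      rcases mul_eq_zero.mp hz with h' | h'
      · have hA1' : 𝓐 = 1 := by linarith
        rw [h𝓐, div_eq_one_iff_eq hQ0.ne'] at hA1'
        exact_mod_cast hA1'
      · linarith
    · intro h
      subst h
      have h1 : 𝓐 = 1 := by rw [h𝓐, div_self hQ0.ne']
      rw [hlam, h1]
      norm_num
      exact (show (0:ℝ) < 1 + 𝓑 * 2 by nlinarith).ne'
  -- critical point equations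
  have hlamq := lamq 𝓑 𝓐 lam (p:ℝ) (q:ℝ) hP0 hQ0 h𝓐 hlameq
  have hquadQ := quadQ 𝓑 𝓐 lam (s₀^2) (p:ℝ) (q:ℝ) hP0 hQ0 h𝓐 hXq
  have haQne : lam*(q:ℝ) + ((p:ℝ)+(q:ℝ))*𝓑*lam*(1+lam) ≠ 0 := by
    have h1 := mul_pos hlam0 hQ0
    have h2 := mul_pos (mul_pos (mul_pos (show (0:ℝ) < (p:ℝ)+(q:ℝ) by linarith) hB0) hlam0)
      (show (0:ℝ) < 1+lam by linarith)
    intro hcon; linarith [hcon.le]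
  have hcLne : (q:ℝ)*((p:ℝ) + 𝓑*((p:ℝ)+(q:ℝ))) ≠ 0 := by
    have h2 := mul_pos hB0 (show (0:ℝ) < (p:ℝ)+(q:ℝ) by linarith)
    have h3 : 0 < (q:ℝ)*((p:ℝ) + 𝓑*((p:ℝ)+(q:ℝ))) := mul_pos hQ0 (by linarith)
    exact h3.ne'
  obtain ⟨hG1, hG2⟩ := crit 𝓑 (p:ℝ) (q:ℝ) lam (s₀^2) haQne hcLne hlamq hquadQ
  obtain ⟨hgs, hgt⟩ := gsgt 𝓑 (p:ℝ) (q:ℝ) lam s₀ hlam0 hlam1 hs0pos hs01 hG1 hG2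
  have ht0pos : 0 < lam*s₀ := mul_pos hlam0 hs0pos
  have ht01 : lam*s₀ < 1 := by nlinarith
  have hcore := core 𝓑 (p:ℝ) (q:ℝ) s₀ (lam*s₀) hB0 hB1 hP1 hPQ' hs0pos hs01 ht0pos ht01 hgs hgt
  -- energy upper bound
  have hGleV : ∀ z₁ z₂ : ℂ, ‖z₁‖ < 1 → ‖z₂‖ < 1 → z₁ ≠ z₂ →
      2*(p:ℝ)*(q:ℝ)*Real.log (‖z₁ - z₂‖)
        + 𝓑*((p:ℝ)^2*Real.log (1-(‖z₁‖)^2) + (q:ℝ)^2*Real.log (1-(‖z₂‖)^2)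
          + 2*(p:ℝ)*(q:ℝ)*Real.log (‖1 - z₁*(starRingEnd ℂ) z₂‖))
      ≤ 2*(p:ℝ)*(q:ℝ)*Real.log (s₀+lam*s₀)
        + 𝓑*((p:ℝ)^2*Real.log (1-s₀^2) + (q:ℝ)^2*Real.log (1-(lam*s₀)^2)
          + 2*(p:ℝ)*(q:ℝ)*Real.log (1+s₀*(lam*s₀))) := by
    intro z₁ z₂ h1 h2 hne
    have hF := FleG 𝓑 (p:ℝ) (q:ℝ) hB0 hP0 hQ0 z₁ z₂ h1 h2 hne
    have ha1 : 0 ≤ ‖z₁‖ := norm_nonneg z₁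
    have ha2 : 0 ≤ ‖z₂‖ := norm_nonneg z₂
    have hsumpos : 0 < ‖z₁‖ + ‖z₂‖ := by
      by_contra hc
      push_neg at hc
      have h1z : ‖z₁‖ = 0 := by linarith
      have h2z : ‖z₂‖ = 0 := by linarith
      exact hne (by rw [norm_eq_zero.mp h1z, norm_eq_zero.mp h2z])
    by_cases hcase : ‖z₁‖ = s₀ ∧ ‖z₂‖ = lam*s₀
    · rw [hcase.1, hcase.2] at hF ⊢
      exact hF
    · have hstr := hcore (‖z₁‖) (‖z₂‖) ha1 h1 ha2 h2 hsumpos hcase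
      linarith
  -- value at the target points
  have hFT : ∀ θ:ℝ,
      2*(p:ℝ)*(q:ℝ)*Real.log (‖((s₀:ℂ) * Complex.exp ((θ:ℂ) * Complex.I))
          - (-(((lam * s₀ : ℝ)) : ℂ) * Complex.exp ((θ:ℂ) * Complex.I))‖)
        + 𝓑*((p:ℝ)^2*Real.log (1-(‖(s₀:ℂ) * Complex.exp ((θ:ℂ) * Complex.I)‖)^2)
          + (q:ℝ)^2*Real.log (1-(‖-(((lam * s₀ : ℝ)) : ℂ)
              * Complex.exp ((θ:ℂ) * Complex.I)‖)^2)
          + 2*(p:ℝ)*(q:ℝ)*Real.log (‖1 - ((s₀:ℂ) * Complex.exp ((θ:ℂ) * Complex.I))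
              * (starRingEnd ℂ) (-(((lam * s₀ : ℝ)) : ℂ) * Complex.exp ((θ:ℂ) * Complex.I))‖))
      = 2*(p:ℝ)*(q:ℝ)*Real.log (s₀+lam*s₀)
        + 𝓑*((p:ℝ)^2*Real.log (1-s₀^2) + (q:ℝ)^2*Real.log (1-(lam*s₀)^2)
          + 2*(p:ℝ)*(q:ℝ)*Real.log (1+s₀*(lam*s₀))) := by
    intro θ
    obtain ⟨e1, e2, e3, e4⟩ := Tpoint s₀ (lam*s₀) θ hs0pos ht0pos
    rw [e1, e2, e3, e4]
  have hTmem : ∀ θ:ℝ, ((s₀:ℂ) * Complex.exp ((θ:ℂ) * Complex.I)) ∈ Metric.ball (0:ℂ) 1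
      ∧ (-(((lam * s₀ : ℝ)) : ℂ) * Complex.exp ((θ:ℂ) * Complex.I)) ∈ Metric.ball (0:ℂ) 1
      ∧ ((s₀:ℂ) * Complex.exp ((θ:ℂ) * Complex.I))
          ≠ (-(((lam * s₀ : ℝ)) : ℂ) * Complex.exp ((θ:ℂ) * Complex.I)) := by
    intro θ
    obtain ⟨e1, e2, e3, e4⟩ := Tpoint s₀ (lam*s₀) θ hs0pos ht0pos
    refine ⟨?_, ?_, ?_⟩
    · rw [mem_ball_zero_iff, e1]; exact hs01
    · rw [mem_ball_zero_iff, e2]; exact ht01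
    · intro hcon
      rw [hcon, sub_self, norm_zero] at e3
      linarith
  -- the set equality
  have hsetEq : {zz : ℂ × ℂ |
        (zz.1 ∈ Metric.ball (0:ℂ) 1 ∧ zz.2 ∈ Metric.ball (0:ℂ) 1 ∧ zz.1 ≠ zz.2) ∧
        ∀ zz' : ℂ × ℂ,
          zz'.1 ∈ Metric.ball (0:ℂ) 1 → zz'.2 ∈ Metric.ball (0:ℂ) 1 → zz'.1 ≠ zz'.2 →
          Wpair b p q zz.1 zz.2 ≤ Wpair b p q zz'.1 zz'.2}
      = {zz : ℂ × ℂ | ∃ θ : ℝ,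
          zz = ((s₀ : ℂ) * Complex.exp ((θ : ℂ) * Complex.I),
            -(((lam * s₀ : ℝ)) : ℂ) * Complex.exp ((θ : ℂ) * Complex.I))} := by
    ext zz
    obtain ⟨z₁, z₂⟩ := zz
    simp only [Set.mem_setOf_eq]
    constructor
    · rintro ⟨⟨hm1, hm2, hne⟩, hmin⟩
      have h1 : ‖z₁‖ < 1 := by
        exact mem_ball_zero_iff.mp hm1
      have h2 : ‖z₂‖ < 1 := by
        exact mem_ball_zero_iff.mp hm2
      obtain ⟨hT1, hT2, hTne⟩ := hTmem 0
      have hWz := hmin ((s₀:ℂ) * Complex.exp (((0:ℝ):ℂ) * Complex.I),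
        -(((lam * s₀ : ℝ)) : ℂ) * Complex.exp (((0:ℝ):ℂ) * Complex.I)) hT1 hT2 hTne
      rw [Wpair_eq b p q 𝓑 h𝓑, Wpair_eq b p q 𝓑 h𝓑, Wle_iff b hb0] at hWz
      rw [hFT 0] at hWz
      have hFle := hGleV z₁ z₂ h1 h2 hne
      have ha1 : 0 ≤ ‖z₁‖ := norm_nonneg z₁
      have ha2 : 0 ≤ ‖z₂‖ := norm_nonneg z₂
      have hsumpos : 0 < ‖z₁‖ + ‖z₂‖ := by
        by_contra hc
        push_neg at hc
        have h1z : ‖z₁‖ = 0 := by linarith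
        have h2z : ‖z₂‖ = 0 := by linarith
        exact hne (by rw [norm_eq_zero.mp h1z, norm_eq_zero.mp h2z])
      have hcase : ‖z₁‖ = s₀ ∧ ‖z₂‖ = lam*s₀ := by
        by_contra hc
        have hstr := hcore (‖z₁‖) (‖z₂‖) ha1 h1 ha2 h2 hsumpos hc
        have hF := FleG 𝓑 (p:ℝ) (q:ℝ) hB0 hP0 hQ0 z₁ z₂ h1 h2 hne
        linarith
      have hFV := le_antisymm hFle hWz
      rw [← hcase.2, ← hcase.1] at hFV
      have habs := FeqG 𝓑 (p:ℝ) (q:ℝ) hB0 hP0 hQ0 z₁ z₂ h1 h2 hne hFV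
      have hz1ne : z₁ ≠ 0 := by
        intro h0
        rw [h0, norm_zero] at hcase
        exact absurd hcase.1.symm hs0pos.ne'
      have hz2ne : z₂ ≠ 0 := by
        intro h0
        rw [h0, norm_zero] at hcase
        exact absurd hcase.2.symm ht0pos.ne'
      obtain ⟨θ, he1, he2⟩ := antipodal z₁ z₂ hz1ne hz2ne habs
      rw [hcase.1] at he1
      rw [hcase.2] at he2
      exact ⟨θ, by rw [Prod.mk.injEq]; exact ⟨he1, he2⟩⟩
    · rintro ⟨θ, hzz⟩
      rw [Prod.mk.injEq] at hzz
      obtain ⟨hz1, hz2⟩ := hzz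
      subst hz1
      subst hz2
      obtain ⟨hT1, hT2, hTne⟩ := hTmem θ
      refine ⟨⟨hT1, hT2, hTne⟩, ?_⟩
      intro zz' h1' h2' hne'
      rw [Wpair_eq b p q 𝓑 h𝓑, Wpair_eq b p q 𝓑 h𝓑, Wle_iff b hb0]
      rw [hFT θ]
      exact hGleV zz'.1 zz'.2
        (by exact mem_ball_zero_iff.mp h1')
        (by exact mem_ball_zero_iff.mp h2') hne'
  -- the p = q case
  refine ⟨⟨hlam0, hlam1⟩, hΔ0, ⟨hs0pos, hs01⟩, hsetEq, hiff, ?_⟩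
  intro hpq'
  have hlam' : lam = 1 := hiff.mpr hpq'
  have h𝓐1 : 𝓐 = 1 := by
    rw [h𝓐, hpq', div_self (show ((q:ℕ):ℝ) ≠ 0 by exact_mod_cast hq.ne')]
  have hy : (0:ℝ) < 1 + 4*𝓑 := by linarith
  have hΔval : Δ = 4*(1+4*𝓑) := by rw [hΔ, hlam', h𝓐1]; ring
  have hsqrt4 : Real.sqrt (4*(1+4*𝓑)) = 2*Real.sqrt (1+4*𝓑) := by
    rw [show (4:ℝ)*(1+4*𝓑) = 2^2*(1+4*𝓑) by ring, Real.sqrt_mul (by positivity),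
      Real.sqrt_sq (by norm_num)]
  have hs0val : s₀ = (1+4*𝓑) ^ (-(1/4:ℝ)) := by
    rw [hs₀, hlam', h𝓐1, hΔval, hsqrt4]
    rw [show (-(1 - 1 + (1 - 1) * 𝓑 * (1 + 1)) + 2*Real.sqrt (1+4*𝓑))
        / (2 * (1 + (1 + 1) * 𝓑 * 1 * (1 + 1))) = Real.sqrt (1+4*𝓑) / (1+4*𝓑) by
      rw [show (1:ℝ) + (1 + 1) * 𝓑 * 1 * (1 + 1) = 1+4*𝓑 by ring]
      rw [show -(1 - 1 + (1 - 1) * 𝓑 * (1 + 1)) + 2*Real.sqrt (1+4*𝓑)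
        = 2*Real.sqrt (1+4*𝓑) by ring]
      rw [mul_div_mul_left _ _ (two_ne_zero)]]
    have hss : Real.sqrt (1+4*𝓑) * Real.sqrt (1+4*𝓑) = 1+4*𝓑 := Real.mul_self_sqrt hy.le
    rw [show Real.sqrt (1+4*𝓑) / (1+4*𝓑) = (Real.sqrt (1+4*𝓑))⁻¹ by
      rw [inv_eq_one_div, div_eq_div_iff hy.ne' (Real.sqrt_ne_zero'.mpr hy)]
      linear_combination hss]
    rw [show (Real.sqrt (1+4*𝓑))⁻¹ = (1+4*𝓑) ^ (-(1/2:ℝ)) by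
      rw [Real.sqrt_eq_rpow, ← Real.rpow_neg hy.le]]
    rw [Real.sqrt_eq_rpow, ← Real.rpow_mul hy.le]
    norm_num
  have hc : (1:ℝ) + 4*(1-b^2)/(1+b^2) = 1 + 4*𝓑 := by rw [h𝓑]; ring
  have hc2 : lam * s₀ = s₀ := by rw [hlam', one_mul]
  rw [hc2] at hsetEq
  rw [hc, ← hs0val]
  exact hsetEq

end GLPin
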